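/- arXiv:2302.09613 — 2 statements merged into one kernel-verified Lean document; each statement's English description precedes it below -/
import Mathlib

section
/- Let α > -1 and let F : ℝ → ℂ be 2π-periodic and absolutely continuous with derivative Ḟ integrable on (0,2π), and let f = P_α[F] be its α-harmonic extension. Then for every z ∈ 𝔻, the angular derivative satisfies ∂_θ f(z) = i(z·∂f(z) − z̄·∂̄f(z)) = (1/2π)∫₀^{2π} P_α(z e^{−it}) Ḟ(t) dt; that is, ∂_θ f = P_α[Ḟ]. -/
/-!
Differentiating under the integral sign, the angular derivative of `P_α[F]` at `z` is
`-(1/2π) ∫ ψ'(t) F(t) dt` with `ψ(t) = P_α(z e^{-it})`, because rotating `z` is the same as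
moving along the boundary variable `t`. Integrating by parts against the absolutely continuous
`F = F(0) + ∫₀ F'` moves the derivative onto `F`; the boundary terms cancel since both `ψ` and
`F` are `2π`-periodic. As `F` is only absolutely continuous, this integration by parts is
proved by Fubini on the triangle `s ≤ t`.
-/

open Complex MeasureTheory Real Set

noncomputable section

/-- Wirtinger derivative `∂f = (f_x - i f_y)/2` of a function `f : ℂ → ℂ`,
viewed as a real-differentiable map. -/
def wdz (f : ℂ → ℂ) (z : ℂ) : ℂ :=
  (fderiv ℝ f z 1 - Complex.I * fderiv ℝ f z Complex.I) / 2

/-- Wirtinger derivative `∂̄f = (f_x + i f_y)/2`. -/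
def wdzbar (f : ℂ → ℂ) (z : ℂ) : ℂ :=
  (fderiv ℝ f z 1 + Complex.I * fderiv ℝ f z Complex.I) / 2

/-- The `α`-harmonic Poisson kernel
`P_α(z) = (1-|z|²)^{α+1} / ((1-z)(1-z̄)^{α+1})` (principal powers). -/
def alphaPoissonKernel (α : ℝ) (z : ℂ) : ℂ :=
  (((1 - ‖z‖ ^ 2) ^ (α + 1) : ℝ) : ℂ) /
    ((1 - z) * (1 - (starRingEnd ℂ) z) ^ ((α : ℂ) + 1))

/-- The `α`-harmonic extension `P_α[F](z) = (1/2π) ∫₀^{2π} P_α(z e^{-it}) F(t) dt`. -/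
def poissonExt (α : ℝ) (F : ℝ → ℂ) (z : ℂ) : ℂ :=
  (1 / (2 * Real.pi) : ℂ) *
    ∫ t in (0:ℝ)..(2 * Real.pi), alphaPoissonKernel α (z * Complex.exp (-Complex.I * t)) * F t

/-- The angular derivative `∂_θ f(z) = i (z ∂f(z) - z̄ ∂̄f(z))`. -/
def angularDeriv (f : ℂ → ℂ) (z : ℂ) : ℂ :=
  Complex.I * (z * wdz f z - (starRingEnd ℂ) z * wdzbar f z)

/-- The integral mean `M_p(r,g) = ((1/2π) ∫₀^{2π} |g(r e^{iθ})|^p dθ)^{1/p}`. -/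
def Mp (p : ℝ) (r : ℝ) (g : ℂ → ℂ) : ℝ :=
  ((1 / (2 * Real.pi)) *
      ∫ θ in (0:ℝ)..(2 * Real.pi),
        ‖g ((r : ℂ) * Complex.exp (Complex.I * θ))‖ ^ p) ^ (1 / p)

/-- The boundary `L^p` norm `‖G‖_{L^p} = ((1/2π) ∫₀^{2π} |G(t)|^p dt)^{1/p}`. -/
def lpNormBdry (p : ℝ) (G : ℝ → ℂ) : ℝ :=
  ((1 / (2 * Real.pi)) * ∫ t in (0:ℝ)..(2 * Real.pi), ‖G t‖ ^ p) ^ (1 / p)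

/-- The constant `c_α = Γ(α+1)/Γ(α/2+1)²`. -/
def cAlpha (α : ℝ) : ℝ := Real.Gamma (α + 1) / (Real.Gamma (α / 2 + 1)) ^ 2

/-- `I_α(r) = (1/2π) ∫₀^{2π} (1-r²)^α / |1 - r e^{it}|^{α+1} dt`. -/
def Ialpha (α r : ℝ) : ℝ :=
  (1 / (2 * Real.pi)) *
    ∫ t in (0:ℝ)..(2 * Real.pi),
      (1 - r ^ 2) ^ α / (‖1 - (r : ℂ) * Complex.exp (Complex.I * t)‖) ^ (α + 1)

/-- `g_α(z) = ((1-|z|²)/(1-z̄))^α` (principal complex power). -/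
def gAlpha (α : ℝ) (z : ℂ) : ℂ :=
  ((((1 - ‖z‖ ^ 2 : ℝ)) : ℂ) / (1 - (starRingEnd ℂ) z)) ^ (α : ℂ)

end

open Filter

theorem angularDeriv_eq_fderiv_apply (f : ℂ → ℂ) (z : ℂ) :
    angularDeriv f z = fderiv ℝ f z (I * z) := by
  have hIz : I * z = (-z.im) • (1 : ℂ) + z.re • I := by
    apply Complex.ext <;> simp
  have hz : z = z.re + z.im * I := (re_add_im z).symm
  have hconj : (starRingEnd ℂ) z = z.re - z.im * I := by
    apply Complex.ext <;> simp
  rw [hIz, map_add, map_smul, map_smul, angularDeriv, wdz, wdzbar, hconj]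
  nth_rewrite 1 [hz]
  simp only [real_smul, ofReal_neg]
  linear_combination (z.im * fderiv ℝ f z 1 - z.re * fderiv ℝ f z I) * I_sq

theorem contDiffAt_alphaPoissonKernel (α : ℝ) {n : WithTop ℕ∞} {z : ℂ} (hz : ‖z‖ < 1) :
    ContDiffAt ℝ n (alphaPoissonKernel α) z := by
  have hre : 0 < (1 - (starRingEnd ℂ) z).re := by
    simpa using (re_le_norm z).trans_lt hz
  have hnum : ContDiffAt ℝ n (fun w : ℂ => (((1 - ‖w‖ ^ 2) ^ (α + 1) : ℝ) : ℂ)) z := by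
    have hpos : 1 - ‖z‖ ^ 2 ≠ 0 := by nlinarith [norm_nonneg z]
    exact ofRealCLM.contDiff.contDiffAt.comp z
      ((contDiffAt_const.sub (contDiff_norm_sq ℝ).contDiffAt).rpow_const_of_ne hpos)
  have hpow : ContDiffAt ℝ n (fun w : ℂ => (1 - (starRingEnd ℂ) w) ^ ((α : ℂ) + 1)) z :=
    ((analyticAt_id.cpow analyticAt_const (Or.inl hre)).contDiffAt.restrict_scalars ℝ).comp z
      (contDiffAt_const.sub conjCLE.contDiff.contDiffAt)
  have hden : (1 - z) * (1 - (starRingEnd ℂ) z) ^ ((α : ℂ) + 1) ≠ 0 := by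
    refine mul_ne_zero (sub_ne_zero.mpr ?_) ?_
    · rintro rfl
      simp at hz
    · exact cpow_ne_zero_iff.mpr (Or.inl fun h => by simp [h] at hre)
  exact (hnum.mul (((contDiffAt_const.sub contDiffAt_id).mul hpow).inv hden)).congr_of_eventuallyEq
    (Eventually.of_forall fun _ => div_eq_mul_inv _ _)

theorem contDiffOn_alphaPoissonKernel (α : ℝ) {n : WithTop ℕ∞} :
    ContDiffOn ℝ n (alphaPoissonKernel α) (Metric.ball 0 1) := fun _ hz =>
  (contDiffAt_alphaPoissonKernel α (mem_ball_zero_iff.mp hz)).contDiffWithinAt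

section IntegrationByParts

variable {u v : ℝ → ℂ} {a b : ℝ}

theorem integral_mul_primitive_eq_integral_tail_mul (hab : a ≤ b)
    (hu : IntervalIntegrable u volume a b) (hv : IntervalIntegrable v volume a b) :
    ∫ t in a..b, u t * ∫ s in a..t, v s = ∫ s in a..b, (∫ t in s..b, u t) * v s := by
  let G : ℝ → ℝ → ℂ := fun t s =>
    {p : ℝ × ℝ | p.2 ≤ p.1}.indicator (fun p => u p.1 * v p.2) (t, s)
  have hG : Integrable (Function.uncurry G)
      ((volume.restrict (Ioc a b)).prod (volume.restrict (Ioc a b))) :=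
    (hu.1.mul_prod hv.1).indicator (measurableSet_le measurable_snd measurable_fst)
  have inner_s : ∀ t ∈ Ioc a b, ∫ s in Ioc a b, G t s = u t * ∫ s in a..t, v s := by
    intro t ht
    have hGt : G t = (Iic t).indicator fun s => u t * v s := by
      ext s; simp [G, indicator_apply]
    rw [hGt, setIntegral_indicator measurableSet_Iic, Ioc_inter_Iic, min_eq_right ht.2,
      integral_const_mul, intervalIntegral.integral_of_le ht.1.le]
  have inner_t : ∀ s ∈ Ioc a b, ∫ t in Ioc a b, G t s = (∫ t in s..b, u t) * v s := by
    intro s hs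
    have hGs : (fun t => G t s) = (Ici s).indicator fun t => u t * v s := by
      ext t; simp [G, indicator_apply]
    have hIcc : Ioc a b ∩ Ici s = Icc s b := by
      ext t
      simp only [mem_inter_iff, mem_Ioc, mem_Ici, mem_Icc]
      constructor
      · rintro ⟨⟨-, htb⟩, hst⟩; exact ⟨hst, htb⟩
      · rintro ⟨hst, htb⟩; exact ⟨⟨hs.1.trans_le hst, htb⟩, hst⟩
    rw [hGs, setIntegral_indicator measurableSet_Ici, hIcc, integral_Icc_eq_integral_Ioc,
      ← intervalIntegral.integral_of_le hs.2, intervalIntegral.integral_mul_const]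
  calc ∫ t in a..b, u t * ∫ s in a..t, v s
      = ∫ t in Ioc a b, ∫ s in Ioc a b, G t s := by
        rw [intervalIntegral.integral_of_le hab]
        exact setIntegral_congr_fun measurableSet_Ioc fun t ht => (inner_s t ht).symm
    _ = ∫ s in Ioc a b, ∫ t in Ioc a b, G t s := integral_integral_swap hG
    _ = ∫ s in a..b, (∫ t in s..b, u t) * v s := by
        rw [intervalIntegral.integral_of_le hab]
        exact setIntegral_congr_fun measurableSet_Ioc inner_t

theorem integral_deriv_mul_eq_sub_of_eq_add_integral {ψ ψ' F : ℝ → ℂ} (hab : a ≤ b)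
    (hψ : ∀ t ∈ uIcc a b, HasDerivAt ψ (ψ' t) t) (hψ' : IntervalIntegrable ψ' volume a b)
    (hv : IntervalIntegrable v volume a b) (hF : ∀ t ∈ uIcc a b, F t = F a + ∫ s in a..t, v s) :
    ∫ t in a..b, ψ' t * F t = ψ b * F b - ψ a * F a - ∫ t in a..b, ψ t * v t := by
  have hψc : ContinuousOn ψ (uIcc a b) := fun t ht => (hψ t ht).continuousAt.continuousWithinAt
  have htail : ∀ s ∈ uIcc a b, ∫ t in s..b, ψ' t = ψ b - ψ s := fun s hs =>
    intervalIntegral.integral_eq_sub_of_hasDerivAt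
      (fun t ht => hψ t (uIcc_subset_uIcc hs right_mem_uIcc ht))
      (hψ'.mono_set (uIcc_subset_uIcc hs right_mem_uIcc))
  have hprim :=
    intervalIntegral.continuousOn_primitive_interval' hv (left_mem_uIcc (a := a) (b := b))
  calc ∫ t in a..b, ψ' t * F t
      = ∫ t in a..b, ψ' t * F a + ψ' t * ∫ s in a..t, v s :=
        intervalIntegral.integral_congr fun t ht => by simp only [hF t ht]; ring
    _ = (ψ b - ψ a) * F a + ∫ s in a..b, (ψ b - ψ s) * v s := by
        rw [intervalIntegral.integral_add (hψ'.mul_const _) (hψ'.mul_continuousOn hprim),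
          intervalIntegral.integral_mul_const,
          integral_mul_primitive_eq_integral_tail_mul hab hψ' hv, htail a left_mem_uIcc]
        congr 1
        exact intervalIntegral.integral_congr fun s hs => by simp only [htail s hs]
    _ = ψ b * F b - ψ a * F a - ∫ t in a..b, ψ t * v t := by
        simp_rw [sub_mul]
        rw [intervalIntegral.integral_sub (hv.const_mul _) (hv.continuousOn_mul hψc),
          intervalIntegral.integral_const_mul,
          hF b right_mem_uIcc]
        ring

end IntegrationByParts

section RotationIntegral

variable {K : ℂ → ℂ} {F : ℝ → ℂ} {a b : ℝ} {z : ℂ}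

theorem norm_mul_exp_neg_I_mul (x : ℂ) (t : ℝ) : ‖x * exp (-I * t)‖ = ‖x‖ := by
  simp [norm_exp]

theorem mul_exp_neg_I_mul_mem_ball (hz : ‖z‖ < 1) (t : ℝ) :
    z * exp (-I * t) ∈ Metric.ball (0 : ℂ) 1 :=
  mem_ball_zero_iff.mpr ((norm_mul_exp_neg_I_mul z t).trans_lt hz)

theorem continuous_fderiv_comp_mul_exp (hK : ContDiffOn ℝ 1 K (Metric.ball 0 1)) (hz : ‖z‖ < 1) :
    Continuous fun t : ℝ =>
      (fderiv ℝ K (z * exp (-I * t))).comp (exp (-I * t) • ContinuousLinearMap.id ℝ ℂ) :=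
  ((hK.continuousOn_fderiv_of_isOpen Metric.isOpen_ball le_rfl).comp_continuous (by fun_prop)
    (mul_exp_neg_I_mul_mem_ball hz)).clm_comp (by fun_prop)

theorem hasFDerivAt_integral_comp_mul_exp (hK : ContDiffOn ℝ 1 K (Metric.ball 0 1))
    (hF : IntervalIntegrable F volume a b) (hz : ‖z‖ < 1) :
    HasFDerivAt (fun x => ∫ t in a..b, K (x * exp (-I * t)) * F t)
      (∫ t in a..b, F t • (fderiv ℝ K (z * exp (-I * t))).comp
        (exp (-I * t) • ContinuousLinearMap.id ℝ ℂ)) z := by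
  have hKc : ContinuousOn (fderiv ℝ K) (Metric.ball 0 1) :=
    hK.continuousOn_fderiv_of_isOpen Metric.isOpen_ball le_rfl
  obtain ⟨r, hzr, hr1⟩ := exists_between hz
  have hsub : Metric.closedBall (0 : ℂ) r ⊆ Metric.ball 0 1 := Metric.closedBall_subset_ball hr1
  obtain ⟨C, hC⟩ := (isCompact_closedBall (0 : ℂ) r).exists_bound_of_continuousOn (hKc.mono hsub)
  have hball : ∀ x ∈ Metric.ball z (r - ‖z‖), ∀ t : ℝ,
      x * exp (-I * t) ∈ Metric.closedBall (0 : ℂ) r := by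
    intro x hx t
    rw [mem_closedBall_zero_iff, norm_mul_exp_neg_I_mul]
    have := norm_le_norm_add_norm_sub' x z
    rw [Metric.mem_ball, dist_eq_norm] at hx
    linarith
  have hKd : ∀ w ∈ Metric.ball (0 : ℂ) 1, HasFDerivAt K (fderiv ℝ K w) w := fun w hw =>
    ((hK.contDiffAt (Metric.isOpen_ball.mem_nhds hw)).differentiableAt one_ne_zero).hasFDerivAt
  have h_diff : ∀ t : ℝ, ∀ x ∈ Metric.ball z (r - ‖z‖),
      HasFDerivAt (fun x => K (x * exp (-I * t)) * F t)
        (F t • (fderiv ℝ K (x * exp (-I * t))).comp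
          (exp (-I * t) • ContinuousLinearMap.id ℝ ℂ)) x := fun t x hx =>
    ((hKd _ (hsub (hball x hx t))).comp x ((hasFDerivAt_id x).mul_const _)).mul_const (F t)
  have h_bound : ∀ t : ℝ, ∀ x ∈ Metric.ball z (r - ‖z‖),
      ‖F t • (fderiv ℝ K (x * exp (-I * t))).comp
          (exp (-I * t) • ContinuousLinearMap.id ℝ ℂ)‖ ≤ ‖F t‖ * C := by
    intro t x hx
    have hrot_norm : ‖exp (-I * t) • ContinuousLinearMap.id ℝ ℂ‖ ≤ 1 := by
      rw [norm_smul]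
      simp [norm_exp]
    rw [norm_smul]
    gcongr
    calc _ ≤ ‖fderiv ℝ K (x * exp (-I * t))‖ * ‖exp (-I * t) • ContinuousLinearMap.id ℝ ℂ‖ :=
          ContinuousLinearMap.opNorm_comp_le _ _
      _ ≤ ‖fderiv ℝ K (x * exp (-I * t))‖ := mul_le_of_le_one_right (norm_nonneg _) hrot_norm
      _ ≤ C := hC _ (hball x hx t)
  have hKcirc : ∀ x : ℂ, ‖x‖ < 1 → Continuous fun t : ℝ => K (x * exp (-I * t)) :=
    fun x hx => hK.continuousOn.comp_continuous (by fun_prop) (mul_exp_neg_I_mul_mem_ball hx)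
  refine intervalIntegral.hasFDerivAt_integral_of_dominated_of_fderiv_le
    (Metric.ball_mem_nhds z (sub_pos.mpr hzr)) ?_ (hF.continuousOn_mul (hKcirc z hz).continuousOn)
    (hF.def'.aestronglyMeasurable.smul
      (continuous_fderiv_comp_mul_exp hK hz).aestronglyMeasurable)
    (ae_of_all _ fun t _ => h_bound t) (hF.norm.mul_const C) (ae_of_all _ fun t _ => h_diff t)
  filter_upwards [Metric.isOpen_ball.mem_nhds (mem_ball_zero_iff.mpr hz)] with x hx
  exact (hKcirc x (mem_ball_zero_iff.mp hx)).aestronglyMeasurable.mul hF.def'.aestronglyMeasurable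

theorem hasDerivAt_comp_mul_exp_neg_I_mul {t : ℝ} (hK : DifferentiableAt ℝ K (z * exp (-I * t))) :
    HasDerivAt (fun s : ℝ => K (z * exp (-I * s)))
      (-fderiv ℝ K (z * exp (-I * t)) (I * z * exp (-I * t))) t := by
  have hcirc : HasDerivAt (fun s : ℝ => z * exp (-I * s)) (-(I * z * exp (-I * t))) t := by
    refine ((((hasDerivAt_id (t : ℂ)).const_mul (-I)).cexp.const_mul z).comp_ofReal).congr_deriv ?_
    simp only [id]
    ring
  have h := hK.hasFDerivAt.comp_hasDerivAt t hcirc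
  rwa [map_neg] at h

end RotationIntegral

theorem fderiv_poissonExt_apply (α : ℝ) {F : ℝ → ℂ} {z : ℂ}
    (hF : IntervalIntegrable F volume 0 (2 * π)) (hz : ‖z‖ < 1) (v : ℂ) :
    fderiv ℝ (poissonExt α F) z v = (1 / (2 * π) : ℂ) *
      ∫ t in (0 : ℝ)..(2 * π),
        fderiv ℝ (alphaPoissonKernel α) (z * exp (-I * t)) (v * exp (-I * t)) * F t := by
  have hK := contDiffOn_alphaPoissonKernel (n := 1) α
  unfold poissonExt
  rw [((hasFDerivAt_integral_comp_mul_exp hK hF hz).const_mul (1 / (2 * π) : ℂ)).fderiv,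
    smul_apply, ContinuousLinearMap.intervalIntegral_apply
      (hF.smul_continuousOn (continuous_fderiv_comp_mul_exp hK hz).continuousOn), smul_eq_mul]
  congr 1
  refine intervalIntegral.integral_congr fun t _ => ?_
  simp [mul_comm]

theorem angularDeriv_poissonExt_eq_general (α : ℝ)
(F F' : ℝ → ℂ)
    (hFper : Function.Periodic F (2 * Real.pi))
    (hint : IntervalIntegrable F' MeasureTheory.volume 0 (2 * Real.pi))
    (hAC : ∀ θ : ℝ, F θ = F 0 + ∫ t in (0:ℝ)..θ, F' t)
    :
    ∀ z ∈ Metric.ball (0 : ℂ) 1,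
      angularDeriv (poissonExt α F) z =
        (1 / (2 * Real.pi) : ℂ) *
          ∫ t in (0:ℝ)..(2 * Real.pi),
            alphaPoissonKernel α (z * Complex.exp (-Complex.I * t)) * F' t := by
  intro z hz
  have hz1 : ‖z‖ < 1 := mem_ball_zero_iff.mp hz
  have hFc : ContinuousOn F (uIcc 0 (2 * π)) :=
    (continuousOn_const.add (intervalIntegral.continuousOn_primitive_interval' hint
      left_mem_uIcc)).congr fun θ _ => hAC θ
  rw [angularDeriv_eq_fderiv_apply, fderiv_poissonExt_apply α hFc.intervalIntegrable hz1]
  set K := alphaPoissonKernel α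
  have hψ : ∀ t : ℝ, HasDerivAt (fun s : ℝ => K (z * exp (-I * s)))
      (-fderiv ℝ K (z * exp (-I * t)) (I * z * exp (-I * t))) t := fun t =>
    hasDerivAt_comp_mul_exp_neg_I_mul ((contDiffAt_alphaPoissonKernel α
      ((norm_mul_exp_neg_I_mul z t).trans_lt hz1)).differentiableAt one_ne_zero)
  have hψ' : Continuous fun t : ℝ => -fderiv ℝ K (z * exp (-I * t)) (I * z * exp (-I * t)) :=
    (((contDiffOn_alphaPoissonKernel α).continuousOn_fderiv_of_isOpen Metric.isOpen_ball
      le_rfl).comp_continuous (by fun_prop) (mul_exp_neg_I_mul_mem_ball hz1)).clm_apply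
      (by fun_prop) |>.neg
  have hibp := integral_deriv_mul_eq_sub_of_eq_add_integral two_pi_pos.le (fun t _ => hψ t)
    (hψ'.intervalIntegrable _ _) hint (fun t _ => hAC t)
  have hexp : exp (-I * ↑(2 * π)) = exp (-I * ↑(0 : ℝ)) := by simp [Complex.exp_neg, mul_comm I]
  rw [hexp, show F (2 * π) = F 0 by simpa using hFper 0] at hibp
  simp only [neg_mul, intervalIntegral.integral_neg] at hibp ⊢
  linear_combination -(1 / (2 * π) : ℂ) * hibp

/-- For an absolutely continuous `2π`-periodic boundary function `F` with
integrable derivative `F'`, the angular derivative of the `α`-harmonic extension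
`f = P_α[F]` equals `P_α[F']` on the unit disk. -/
theorem angularDeriv_poissonExt_eq (α : ℝ) (hα : -1 < α)
(F F' : ℝ → ℂ)
    (hFper : Function.Periodic F (2 * Real.pi))
    (hF'per : Function.Periodic F' (2 * Real.pi))
    (hint : IntervalIntegrable F' MeasureTheory.volume 0 (2 * Real.pi))
    (hmean : (∫ t in (0:ℝ)..(2 * Real.pi), F' t) = 0)
    (hAC : ∀ θ : ℝ, F θ = F 0 + ∫ t in (0:ℝ)..θ, F' t)
    :
    ∀ z ∈ Metric.ball (0 : ℂ) 1,
      angularDeriv (poissonExt α F) z =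
        (1 / (2 * Real.pi) : ℂ) *
          ∫ t in (0:ℝ)..(2 * Real.pi),
            alphaPoissonKernel α (z * Complex.exp (-Complex.I * t)) * F' t :=
  angularDeriv_poissonExt_eq_general α F F' hFper hint hAC
end

section
/- Let −1 < α < 0 and let e(z) = P_α[e^{−iθ}](z) = (1/2π)∫₀^{2π} P_α(z e^{−it}) e^{−it} dt be the α-harmonic extension of the boundary function θ ↦ e^{−iθ}. Then ∂̄e(z) = (α+1)·(1−|z|²)^α for every z ∈ 𝔻; consequently, for every p ≥ −1/α one has ∫_𝔻 |∂̄e(z)|^p dA(z) = ∞ (so ∂̄e ∉ L^p(𝔻)), and sup_{0<r<1} M_1(r, ∂̄e) = ∞ (so ∂̄e ∉ H^1_G(𝔻)). -/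
/-!
Substituting `u = e^{it}`, the Poisson integral of `e^{-iθ}` becomes
`(1-|z|²)^{α+1}/(2πi) ∮ du / (u (u - z) (1 - z̄u)^{α+1})`; partial fractions and Cauchy's formula
evaluate it to `e(z) = (1 - (1-|z|²)^{α+1}) / z`. Writing `e(z) = φ(|z|²)/z` with
`φ(s) = 1 - (1-s)^{α+1}`, the rules `∂̄|z|² = z` and `∂̄(1/z) = 0` give
`∂̄e = φ'(|z|²) = (α+1)(1-|z|²)^α` (at `z = 0` directly from `φ(s) = (α+1)s + o(s)`).
So `|∂̄e|^p` is a multiple of `(1-|z|²)^{αp}`, which in polar coordinates and after `s = 1 - r²` is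
integrable only for `αp > -1`, and `M_1(r, ∂̄e) = (α+1)(1-r²)^α → ∞` as `r → 1`.
-/

open Complex MeasureTheory Real Set

open Metric ComplexConjugate Filter Topology

theorem one_sub_norm_sq_pos_of_mem_ball {E : Type*} [SeminormedAddCommGroup E] {x : E}
    (hx : x ∈ ball (0 : E) 1) : 0 < 1 - ‖x‖ ^ 2 := by
  have := mem_ball_zero_iff.1 hx
  nlinarith [norm_nonneg x]

theorem Filter.EventuallyEq.wdzbar_eq {f g : ℂ → ℂ} {z : ℂ} (h : f =ᶠ[𝓝 z] g) :
    wdzbar f z = wdzbar g z := by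
  rw [wdzbar, wdzbar, h.fderiv_eq]

theorem wdzbar_eq_of_hasFDerivAt {f : ℂ → ℂ} {L : ℂ →L[ℝ] ℂ} {z : ℂ} (hf : HasFDerivAt f L z) :
    wdzbar f z = (L 1 + I * L I) / 2 := by
  rw [wdzbar, hf.fderiv]

theorem wdzbar_eq_zero_of_differentiableAt {f : ℂ → ℂ} {z : ℂ} (hf : DifferentiableAt ℂ f z) :
    wdzbar f z = 0 := by
  rw [wdzbar_eq_of_hasFDerivAt (hf.hasFDerivAt.restrictScalars ℝ)]
  have hI : fderiv ℂ f z I = I * fderiv ℂ f z 1 := by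
    rw [← smul_eq_mul, ← ContinuousLinearMap.map_smul, smul_eq_mul, mul_one]
  simp only [ContinuousLinearMap.coe_restrictScalars', hI, ← mul_assoc, I_mul_I]
  ring

theorem wdzbar_mul {f g : ℂ → ℂ} {z : ℂ} (hf : DifferentiableAt ℝ f z)
    (hg : DifferentiableAt ℝ g z) :
    wdzbar (fun w => f w * g w) z = wdzbar f z * g z + f z * wdzbar g z := by
  rw [wdzbar_eq_of_hasFDerivAt (f := fun w => f w * g w) (hf.hasFDerivAt.mul hg.hasFDerivAt),
    wdzbar, wdzbar]
  simp only [add_apply, smul_apply, smul_eq_mul]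
  ring

theorem wdzbar_ofReal_comp_norm_sq {φ : ℝ → ℝ} {d : ℝ} {z : ℂ} (hφ : HasDerivAt φ d (‖z‖ ^ 2)) :
    wdzbar (fun w => ((φ (‖w‖ ^ 2) : ℝ) : ℂ)) z = d * z := by
  have h : HasFDerivAt (fun w => ((φ (‖w‖ ^ 2) : ℝ) : ℂ)) _ z := ofRealCLM.hasFDerivAt.comp z
    (hφ.comp_hasFDerivAt z (hasStrictFDerivAt_norm_sq z).hasFDerivAt)
  rw [wdzbar_eq_of_hasFDerivAt h]
  simp only [ContinuousLinearMap.comp_apply, smul_apply, coe_innerSL_apply, Complex.inner,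
    ofRealCLM_apply, smul_eq_mul, nsmul_eq_mul, one_mul, conj_re, mul_re, I_re, I_im, conj_im]
  push_cast
  linear_combination (d : ℂ) * re_add_im z

open Asymptotics in
theorem hasFDerivAt_ofReal_comp_norm_sq_div_zero {φ : ℝ → ℝ} {d : ℝ} (hφ0 : φ 0 = 0)
    (hφ : HasDerivAt φ d 0) :
    HasFDerivAt (fun w : ℂ => ((φ (‖w‖ ^ 2) : ℝ) : ℂ) / w)
      (d • (conjCLE : ℂ ≃L[ℝ] ℂ).toContinuousLinearMap) 0 := by
  have hsmall : (fun h : ℂ => φ (‖h‖ ^ 2) - d * ‖h‖ ^ 2) =o[𝓝 0] (fun h => ‖h‖ ^ 2) := by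
    have hnorm : Tendsto (fun h : ℂ => ‖h‖ ^ 2) (𝓝 0) (𝓝 0) :=
      (continuous_norm.pow 2).tendsto' 0 0 (by simp)
    simpa [Function.comp_def, hφ0, mul_comm] using
      (hasDerivAt_iff_isLittleO_nhds_zero.mp hφ).comp_tendsto hnorm
  rw [hasFDerivAt_iff_isLittleO_nhds_zero]
  simp only [zero_add, div_zero, sub_zero, smul_apply, ContinuousLinearEquiv.coe_coe,
    conjCLE_apply]
  have hrem (h : ℂ) : ((φ (‖h‖ ^ 2) : ℝ) : ℂ) / h - d • conj h
      = ((φ (‖h‖ ^ 2) - d * ‖h‖ ^ 2 : ℝ) : ℂ) / h := by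
    rcases eq_or_ne h 0 with rfl | hh
    · simp -- both sides vanish by the convention `x / 0 = 0`
    · rw [real_smul]
      push_cast
      field_simp
      rw [← mul_conj' h]
      ring
  simp_rw [hrem]
  refine IsLittleO.of_norm_left ?_
  simp_rw [norm_div, norm_real, div_eq_mul_inv]
  refine (hsmall.norm_left.mul_isBigO (isBigO_refl (fun h : ℂ => ‖h‖⁻¹) _)).trans_isBigO ?_
  refine isBigO_of_le _ fun h => ?_
  rcases eq_or_ne h 0 with rfl | hh
  · simp
  · simp [sq, hh]

theorem wdzbar_ofReal_comp_norm_sq_div {φ : ℝ → ℝ} {d : ℝ} {z : ℂ} (hφ0 : φ 0 = 0)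
    (hφ : HasDerivAt φ d (‖z‖ ^ 2)) :
    wdzbar (fun w : ℂ => ((φ (‖w‖ ^ 2) : ℝ) : ℂ) / w) z = d := by
  rcases eq_or_ne z 0 with rfl | hz
  · rw [norm_zero, zero_pow two_ne_zero] at hφ
    rw [wdzbar_eq_of_hasFDerivAt (hasFDerivAt_ofReal_comp_norm_sq_div_zero hφ0 hφ)]
    simp only [smul_apply, ContinuousLinearEquiv.coe_coe, conjCLE_apply, map_one, conj_I,
      real_smul]
    linear_combination (-(d : ℂ) / 2) * I_sq
  · have hφ' : DifferentiableAt ℝ (fun w : ℂ => ((φ (‖w‖ ^ 2) : ℝ) : ℂ)) z :=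
      ofRealCLM.differentiableAt.comp z
        (hφ.differentiableAt.comp z (hasStrictFDerivAt_norm_sq z).differentiableAt)
    have hinv : DifferentiableAt ℂ (fun w : ℂ => w⁻¹) z := differentiableAt_inv hz
    simp only [div_eq_mul_inv]
    rw [wdzbar_mul hφ' (hinv.restrictScalars ℝ), wdzbar_ofReal_comp_norm_sq hφ,
      wdzbar_eq_zero_of_differentiableAt hinv, mul_zero, add_zero, mul_inv_cancel_right₀ hz]

theorem circleIntegral_inv_mul_sub_smul {E : Type*} [NormedAddCommGroup E] [NormedSpace ℂ E]
    [CompleteSpace E] {R : ℝ} {z : ℂ} {f : ℂ → E} (hf : DiffContOnCl ℂ f (ball 0 R))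
    (hz : z ∈ ball 0 R) (hz0 : z ≠ 0) :
    (∮ u in C(0, R), (u * (u - z))⁻¹ • f u) = (2 * π * I / z) • (f z - f 0) := by
  have hR : 0 < R := dist_nonneg.trans_lt hz
  have hcint : ∀ w ∈ ball (0 : ℂ) R, CircleIntegrable (fun u => (u - w)⁻¹ • f u) 0 R := by
    intro w hw
    refine ContinuousOn.circleIntegrable hR.le (ContinuousOn.smul ?_ ?_)
    · refine (continuousOn_id.sub continuousOn_const).inv₀ fun u hu => sub_ne_zero.2 ?_
      rintro rfl
      exact (mem_ball.1 hw).ne (mem_sphere.1 hu)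
    · exact hf.continuousOn_ball.mono sphere_subset_closedBall
  have hsplit : EqOn (fun u => (u * (u - z))⁻¹ • f u)
      (fun u => z⁻¹ • ((u - z)⁻¹ • f u - (u - 0)⁻¹ • f u)) (sphere 0 R) := by
    intro u hu
    have hu0 : u ≠ 0 := ne_zero_of_mem_sphere hR.ne' ⟨u, hu⟩
    have huz : u - z ≠ 0 := sub_ne_zero.2 fun h => hz.ne (h ▸ hu)
    simp only [sub_zero, ← sub_smul, smul_smul]
    congr 1
    field_simp
    ring
  rw [circleIntegral.integral_congr hR.le hsplit, circleIntegral.integral_smul,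
    circleIntegral.integral_sub (hcint z hz) (hcint 0 (mem_ball_self hR)),
    hf.circleIntegral_sub_inv_smul hz, hf.circleIntegral_sub_inv_smul (mem_ball_self hR),
    ← smul_sub, smul_smul, div_eq_inv_mul]

theorem alphaPoissonKernel_mul_exp_neg (α : ℝ) (z : ℂ) (t : ℝ) :
    alphaPoissonKernel α (z * exp (-I * t)) * exp (-I * t) =
      deriv (circleMap 0 1) t •
        ((((1 - ‖z‖ ^ 2) ^ (α + 1) : ℝ) : ℂ) / I) •
          (circleMap 0 1 t * (circleMap 0 1 t - z))⁻¹ •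
            ((1 - conj z * circleMap 0 1 t) ^ ((α : ℂ) + 1))⁻¹ := by
  set u := circleMap 0 1 t
  have hu : exp (-I * t) = u⁻¹ := by
    simp [u, circleMap, ← Complex.exp_neg, mul_comm]
  have hu0 : u ≠ 0 := circleMap_ne_center one_ne_zero
  have hconj : conj (z * u⁻¹) = conj z * u := by
    have hconj_u : conj u = u⁻¹ := by
      rw [← hu]
      simp [u, circleMap, ← exp_conj, mul_comm]
    rw [map_mul, map_inv₀, hconj_u, inv_inv]
  have hnorm : ‖z * u⁻¹‖ = ‖z‖ := by
    simp [u, norm_circleMap_zero]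
  rw [deriv_circleMap, hu, alphaPoissonKernel, hconj, hnorm]
  simp only [smul_eq_mul, div_eq_mul_inv, mul_inv]
  field_simp
  ring

theorem diffContOnCl_inv_one_sub_mul_cpow {a : ℂ} (ha : ‖a‖ < 1) (β : ℂ) :
    DiffContOnCl ℂ (fun u => ((1 - a * u) ^ β)⁻¹) (ball 0 1) := by
  refine DifferentiableOn.diffContOnCl fun u hu => DifferentiableAt.differentiableWithinAt ?_
  rw [closure_ball 0 one_ne_zero, mem_closedBall_zero_iff] at hu
  have hslit : 1 - a * u ∈ slitPlane := by
    rw [sub_eq_add_neg]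
    refine mem_slitPlane_of_norm_lt_one ?_
    rw [norm_neg, norm_mul]
    nlinarith [norm_nonneg a, norm_nonneg u]
  exact ((differentiableAt_const 1).sub (differentiableAt_id.const_mul a)).cpow_const hslit
    |>.inv (cpow_ne_zero_iff.2 (Or.inl (slitPlane_ne_zero hslit)))

theorem poissonExt_expNeg_eq (α : ℝ) {z : ℂ} (hz : z ∈ ball (0 : ℂ) 1) :
    poissonExt α (fun t => exp (-I * t)) z = ((1 - (1 - ‖z‖ ^ 2) ^ (α + 1) : ℝ) : ℂ) / z := by
  rcases eq_or_ne z 0 with rfl | hz0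
  -- at `z = 0` the right-hand side is `0` by the convention `x / 0 = 0`
  · have hker (t : ℝ) : alphaPoissonKernel α (0 * exp (-I * t)) = 1 := by
      simp [alphaPoissonKernel]
    have hexp : exp (-I * (2 * π : ℝ)) = 1 := by
      simpa [mul_comm] using exp_int_mul_two_pi_mul_I (-1)
    simp only [poissonExt, hker, one_mul, integral_exp_mul_complex (neg_ne_zero.2 I_ne_zero),
      hexp]
    simp
  · set A : ℝ := (1 - ‖z‖ ^ 2) ^ (α + 1)
    have hpos := one_sub_norm_sq_pos_of_mem_ball hz
    have hA : (A : ℂ) ≠ 0 := ofReal_ne_zero.2 (Real.rpow_pos_of_pos hpos _).ne'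
    have hAz : ((1 - conj z * z) ^ ((α : ℂ) + 1))⁻¹ = (A : ℂ)⁻¹ := by
      simp only [A]
      rw [ofReal_cpow hpos.le, conj_mul']
      push_cast
      rfl
    have hint : (∫ t in (0 : ℝ)..2 * π, alphaPoissonKernel α (z * exp (-I * t)) * exp (-I * t)) =
        ∮ u in C(0, 1), ((A : ℂ) / I) • (u * (u - z))⁻¹ • ((1 - conj z * u) ^ ((α : ℂ) + 1))⁻¹ :=
      intervalIntegral.integral_congr fun t _ => alphaPoissonKernel_mul_exp_neg α z t
    rw [poissonExt, hint, circleIntegral.integral_smul, circleIntegral_inv_mul_sub_smul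
      (diffContOnCl_inv_one_sub_mul_cpow (by simpa using hz) _) hz hz0, hAz]
    simp only [mul_zero, sub_zero, one_cpow, inv_one, smul_eq_mul]
    push_cast
    field_simp

theorem integrableOn_Ioo_mul_one_sub_sq_rpow_iff {β : ℝ} :
    IntegrableOn (fun y : ℝ => y * (1 - y ^ 2) ^ β) (Ioo 0 1) ↔ -1 < β := by
  have himage : (fun y : ℝ => 1 - y ^ 2) '' Ioo 0 1 = Ioo 0 1 := by
    ext s
    constructor
    · rintro ⟨y, ⟨hy0, hy1⟩, rfl⟩
      constructor <;> nlinarith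
    · rintro ⟨hs0, hs1⟩
      refine ⟨√(1 - s), ⟨Real.sqrt_pos.2 (by linarith), ?_⟩, ?_⟩
      · rw [Real.sqrt_lt' one_pos]
        linarith
      · simp only
        rw [Real.sq_sqrt (by linarith)]
        ring
  have hanti : AntitoneOn (fun y : ℝ => 1 - y ^ 2) (Ioo 0 1) := fun a ha b _ hab => by
    show 1 - b ^ 2 ≤ 1 - a ^ 2
    nlinarith [ha.1]
  have hderiv : ∀ y ∈ Ioo (0 : ℝ) 1,
      HasDerivWithinAt (fun y : ℝ => 1 - y ^ 2) (-(2 * y)) (Ioo 0 1) y := fun y _ => by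
    simpa using ((hasDerivAt_pow 2 y).const_sub 1).hasDerivWithinAt
  have hsubst := integrableOn_image_iff_integrableOn_deriv_smul_of_antitoneOn measurableSet_Ioo
    hderiv hanti (fun s => s ^ β)
  rw [himage, intervalIntegral.integrableOn_Ioo_rpow_iff one_pos] at hsubst
  rw [hsubst]
  simp only [neg_neg, smul_eq_mul, mul_assoc]
  exact (integrable_const_mul_iff (isUnit_iff_ne_zero.2 (two_ne_zero (α := ℝ))) _).symm

theorem integrableOn_ball_one_sub_norm_sq_rpow_iff {β : ℝ} :
    IntegrableOn (fun z : ℂ => (1 - ‖z‖ ^ 2) ^ β) (ball 0 1) ↔ -1 < β := by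
  rw [integrableOn_fun_norm_addHaar volume (f := fun y : ℝ => (1 - y ^ 2) ^ β),
    Complex.finrank_real_complex]
  simpa using integrableOn_Ioo_mul_one_sub_sq_rpow_iff

theorem Mp_one_eq_of_forall_norm_eq {g : ℂ → ℂ} {r c : ℝ}
    (h : ∀ θ : ℝ, ‖g (r * exp (I * θ))‖ = c) : Mp 1 r g = c := by
  simp only [Mp, Real.rpow_one, h, intervalIntegral.integral_const, smul_eq_mul, div_one,
    sub_zero]
  field_simp

theorem hasDerivAt_one_sub_one_sub_rpow (a : ℝ) {s : ℝ} (hs : s < 1) :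
    HasDerivAt (fun s => 1 - (1 - s) ^ a) (a * (1 - s) ^ (a - 1)) s := by
  refine ((((hasDerivAt_id' s).const_sub 1).rpow_const (Or.inl (sub_ne_zero.2 hs.ne'))).const_sub
    1).congr_deriv ?_
  ring

theorem tendsto_one_sub_sq_rpow_nhdsLT_one {α : ℝ} (hα : α < 0) :
    Tendsto (fun r : ℝ => (1 - r ^ 2) ^ α) (𝓝[<] 1) atTop := by
  refine (tendsto_rpow_neg_nhdsGT_zero hα).comp (tendsto_nhdsWithin_iff.2 ⟨?_, ?_⟩)
  · exact tendsto_nhdsWithin_of_tendsto_nhds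
      ((continuous_const.sub (continuous_pow 2)).tendsto' 1 0 (by norm_num))
  · filter_upwards [Ioo_mem_nhdsLT zero_lt_one] with r hr
    simp only [mem_Ioi]
    nlinarith [hr.1, hr.2]

theorem wdzbar_poissonExt_expNeg_eq (α : ℝ) {z : ℂ} (hz : z ∈ ball (0 : ℂ) 1) :
    wdzbar (poissonExt α fun t => exp (-I * t)) z =
      ((α : ℂ) + 1) * (((1 - ‖z‖ ^ 2) ^ α : ℝ) : ℂ) := by
  have hz2 : ‖z‖ ^ 2 < 1 := by linarith [one_sub_norm_sq_pos_of_mem_ball hz]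
  have hext : (poissonExt α fun t => exp (-I * t)) =ᶠ[𝓝 z]
      fun w => ((1 - (1 - ‖w‖ ^ 2) ^ (α + 1) : ℝ) : ℂ) / w :=
    eventually_of_mem (isOpen_ball.mem_nhds hz) fun w hw => poissonExt_expNeg_eq α hw
  rw [hext.wdzbar_eq, wdzbar_ofReal_comp_norm_sq_div (by simp)
    (hasDerivAt_one_sub_one_sub_rpow (α + 1) hz2), add_sub_cancel_right]
  push_cast
  ring

theorem norm_wdzbar_poissonExt_expNeg {α : ℝ} (hα : -1 < α) {z : ℂ} (hz : z ∈ ball (0 : ℂ) 1) :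
    ‖wdzbar (poissonExt α fun t => exp (-I * t)) z‖ = (α + 1) * (1 - ‖z‖ ^ 2) ^ α := by
  have hpos := one_sub_norm_sq_pos_of_mem_ball hz
  rw [wdzbar_poissonExt_expNeg_eq α hz, ← ofReal_one, ← ofReal_add, ← ofReal_mul, norm_real,
    Real.norm_of_nonneg (mul_pos (by linarith) (Real.rpow_pos_of_pos hpos α)).le]

theorem Mp_one_wdzbar_poissonExt_expNeg {α : ℝ} (hα : -1 < α) {r : ℝ} (hr : r ∈ Ioo (0 : ℝ) 1) :
    Mp 1 r (wdzbar (poissonExt α fun t => exp (-I * t))) = (α + 1) * (1 - r ^ 2) ^ α := by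
  refine Mp_one_eq_of_forall_norm_eq fun θ => ?_
  have hnorm : ‖(r : ℂ) * exp (I * θ)‖ = r := by
    simp [norm_exp, abs_of_pos hr.1]
  rw [norm_wdzbar_poissonExt_expNeg hα (by rw [mem_ball_zero_iff, hnorm]; exact hr.2), hnorm]

/-- For `-1 < α < 0`, the `α`-harmonic extension `e` of `θ ↦ e^{-iθ}`
satisfies `∂̄e(z) = (α+1)(1-|z|²)^α`; consequently `∂̄e ∉ L^p(𝔻)` for `p ≥ -1/α`, and
`∂̄e ∉ H^1_G(𝔻)`. -/
theorem wdzbar_poissonExt_expNeg (α : ℝ) (hα1 : -1 < α) (hα2 : α < 0) :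
    (∀ z ∈ Metric.ball (0 : ℂ) 1,
        wdzbar (poissonExt α fun t => Complex.exp (-Complex.I * t)) z =
          ((α : ℂ) + 1) * (((1 - ‖z‖ ^ 2) ^ α : ℝ) : ℂ)) ∧
      (∀ p : ℝ, -1 / α ≤ p →
        ¬ MeasureTheory.IntegrableOn
            (fun z =>
              ‖wdzbar (poissonExt α fun t => Complex.exp (-Complex.I * t)) z‖ ^ p)
            (Metric.ball (0 : ℂ) 1) MeasureTheory.volume) ∧
      ¬ ∃ C : ℝ, ∀ r ∈ Set.Ioo (0:ℝ) 1,
          Mp 1 r (wdzbar (poissonExt α fun t => Complex.exp (-Complex.I * t))) ≤ C := by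
  have hα1' : 0 < α + 1 := by linarith
  refine ⟨fun z hz => wdzbar_poissonExt_expNeg_eq α hz, fun p hp hint => ?_, fun ⟨C, hC⟩ => ?_⟩
  · have hpow : EqOn (fun z => ‖wdzbar (poissonExt α fun t => exp (-I * t)) z‖ ^ p)
        (fun z => (α + 1) ^ p * (1 - ‖z‖ ^ 2) ^ (α * p)) (ball 0 1) := fun z hz => by
      have hpos := one_sub_norm_sq_pos_of_mem_ball hz
      dsimp only
      rw [norm_wdzbar_poissonExt_expNeg hα1 hz, Real.mul_rpow hα1'.le (by positivity),
        ← Real.rpow_mul hpos.le]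
    have hint_rpow := (integrable_const_mul_iff (isUnit_iff_ne_zero.2 (by positivity)) _).1
      (hint.congr_fun hpow measurableSet_ball)
    have hαp : α * p ≤ -1 := by
      rw [mul_comm]
      exact (div_le_iff_of_neg hα2).1 hp
    exact (integrableOn_ball_one_sub_norm_sq_rpow_iff.1 hint_rpow).not_ge hαp
  · obtain ⟨r, hCr, hr⟩ := (((tendsto_one_sub_sq_rpow_nhdsLT_one hα2).const_mul_atTop
      hα1').eventually_gt_atTop C |>.and (Ioo_mem_nhdsLT zero_lt_one)).exists
    exact (hC r hr).not_gt (Mp_one_wdzbar_poissonExt_expNeg hα1 hr ▸ hCr)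
end
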